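/- No alternating sign matrix that classically avoids both 2143 and 3412 has 4 or more −1 entries in a single row. -/
import Mathlib


def IsASM {n : ℕ} (A : Matrix (Fin n) (Fin n) ℤ) : Prop :=
  (∀ i j, A i j = -1 ∨ A i j = 0 ∨ A i j = 1) ∧
  (∀ i, ∑ j, A i j = 1) ∧
  (∀ j, ∑ i, A i j = 1) ∧
  (∀ i j, ∑ l ∈ Finset.Iic j, A i l = 0 ∨ ∑ l ∈ Finset.Iic j, A i l = 1) ∧
  (∀ i j, ∑ l ∈ Finset.Iic i, A l j = 0 ∨ ∑ l ∈ Finset.Iic i, A l j = 1)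

def ASMContains {n m : ℕ} (A : Matrix (Fin n) (Fin n) ℤ) (σ : Equiv.Perm (Fin m)) : Prop :=
  ∃ f g : Fin m ↪o Fin n, ∀ a, A (f a) (g (σ a)) = 1

def ASMAvoids {n m : ℕ} (A : Matrix (Fin n) (Fin n) ℤ) (σ : Equiv.Perm (Fin m)) : Prop :=
  ¬ ASMContains A σ
def p2143 : Equiv.Perm (Fin 4) := ⟨![1,0,3,2], ![1,0,3,2], by decide, by decide⟩
def p3412 : Equiv.Perm (Fin 4) := ⟨![2,3,0,1], ![2,3,0,1], by decide, by decide⟩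

open Finset

variable {n : ℕ}

lemma myex_one (s : Finset (Fin n)) (v : Fin n → ℤ)
    (hv : ∀ j, v j = -1 ∨ v j = 0 ∨ v j = 1) (h : 1 ≤ ∑ x ∈ s, v x) :
    ∃ x ∈ s, v x = 1 := by
  by_contra hc
  push_neg at hc
  have : ∑ x ∈ s, v x ≤ 0 := Finset.sum_nonpos (fun x hx => by
    rcases hv x with h'|h'|h' <;> simp_all)
  omega

lemma myex_neg (s : Finset (Fin n)) (v : Fin n → ℤ)
    (hv : ∀ j, v j = -1 ∨ v j = 0 ∨ v j = 1) (h : ∑ x ∈ s, v x ≤ -1) :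
    ∃ x ∈ s, v x = -1 := by
  by_contra hc
  push_neg at hc
  have : 0 ≤ ∑ x ∈ s, v x := Finset.sum_nonneg (fun x hx => by
    rcases hv x with h'|h'|h' <;> simp_all)
  omega

lemma sum_Iic_split (v : Fin n → ℤ) (j : Fin n) :
    ∑ l ∈ Iic j, v l = v j + ∑ l ∈ Iio j, v l := by
  rw [← Finset.Iio_insert, Finset.sum_insert (by simp)]

lemma sum_Iio_mem (v : Fin n → ℤ)
    (hs : ∀ j, ∑ l ∈ Iic j, v l = 0 ∨ ∑ l ∈ Iic j, v l = 1) (j : Fin n) :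
    ∑ l ∈ Iio j, v l = 0 ∨ ∑ l ∈ Iio j, v l = 1 := by
  by_cases h : j.val = 0
  · left
    have : Iio j = (∅ : Finset (Fin n)) := by
      ext k; simp only [Finset.mem_Iio, Finset.notMem_empty, iff_false, Fin.lt_def]; omega
    simp [this]
  · have hj' : j.val - 1 < n := by omega
    have : Iio j = Iic ⟨j.val - 1, hj'⟩ := by
      ext k; simp only [Finset.mem_Iio, Finset.mem_Iic, Fin.lt_def, Fin.le_def]; omega
    rw [this]; exact hs _

lemma sum_split_univ (v : Fin n → ℤ) (j : Fin n) :
    ∑ l, v l = ∑ l ∈ Iic j, v l + ∑ l ∈ Ioi j, v l := by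
  rw [← Finset.sum_union (by
    simp only [Finset.disjoint_left, Finset.mem_Iic, Finset.mem_Ioi, Fin.lt_def, Fin.le_def]
    intro a h1 h2; omega)]
  congr 1
  ext k
  simp only [Finset.mem_univ, Finset.mem_union, Finset.mem_Iic, Finset.mem_Ioi, Fin.lt_def,
    Fin.le_def, true_iff]
  omega

lemma sum_split_Ioo (v : Fin n → ℤ) {j j' : Fin n} (h : j < j') :
    ∑ l ∈ Iio j', v l = ∑ l ∈ Iic j, v l + ∑ l ∈ Ioo j j', v l := by
  have h' := Fin.lt_def.mp h
  rw [← Finset.sum_union (by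
    simp only [Finset.disjoint_left, Finset.mem_Iic, Finset.mem_Ioo, Fin.lt_def, Fin.le_def]
    intro a h1 h2; omega)]
  congr 1
  ext k
  simp only [Finset.mem_Iio, Finset.mem_union, Finset.mem_Iic, Finset.mem_Ioo, Fin.lt_def,
    Fin.le_def]
  omega

lemma around (v : Fin n → ℤ) (hv : ∀ j, v j = -1 ∨ v j = 0 ∨ v j = 1)
    (hs : ∀ j, ∑ l ∈ Iic j, v l = 0 ∨ ∑ l ∈ Iic j, v l = 1)
    (htot : ∑ l, v l = 1) {j : Fin n} (hj : v j = -1) :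
    (∃ x, x < j ∧ v x = 1) ∧ (∃ x, j < x ∧ v x = 1) := by
  have h1 := sum_Iio_mem v hs j
  have h2 := sum_Iic_split v j
  have h3 := hs j
  have hio : ∑ l ∈ Iio j, v l = 1 := by omega
  have hic : ∑ l ∈ Iic j, v l = 0 := by omega
  constructor
  · obtain ⟨x, hx, hx1⟩ := myex_one _ v hv (le_of_eq hio.symm)
    exact ⟨x, Finset.mem_Iio.mp hx, hx1⟩
  · have h4 := sum_split_univ v j
    obtain ⟨x, hx, hx1⟩ := myex_one (Ioi j) v hv (by omega)
    exact ⟨x, Finset.mem_Ioi.mp hx, hx1⟩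

lemma between_neg (v : Fin n → ℤ) (hv : ∀ j, v j = -1 ∨ v j = 0 ∨ v j = 1)
    (hs : ∀ j, ∑ l ∈ Iic j, v l = 0 ∨ ∑ l ∈ Iic j, v l = 1)
    {j j' : Fin n} (h : j < j') (hj : v j = -1) (hj' : v j' = -1) :
    ∃ x, j < x ∧ x < j' ∧ v x = 1 := by
  have h1 := sum_Iio_mem v hs j
  have h2 := sum_Iic_split v j
  have h3 := hs j
  have h1' := sum_Iio_mem v hs j'
  have h2' := sum_Iic_split v j'
  have h3' := hs j'
  have h4 := sum_split_Ioo v h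
  obtain ⟨x, hx, hx1⟩ := myex_one (Ioo j j') v hv (by omega)
  rw [Finset.mem_Ioo] at hx
  exact ⟨x, hx.1, hx.2, hx1⟩

lemma between_one (v : Fin n → ℤ) (hv : ∀ j, v j = -1 ∨ v j = 0 ∨ v j = 1)
    (hs : ∀ j, ∑ l ∈ Iic j, v l = 0 ∨ ∑ l ∈ Iic j, v l = 1)
    {j j' : Fin n} (h : j < j') (hj : v j = 1) (hj' : v j' = 1) :
    ∃ x, j < x ∧ x < j' ∧ v x = -1 := by
  have h1 := sum_Iio_mem v hs j
  have h2 := sum_Iic_split v j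
  have h3 := hs j
  have h1' := sum_Iio_mem v hs j'
  have h2' := sum_Iic_split v j'
  have h3' := hs j'
  have h4 := sum_split_Ioo v h
  obtain ⟨x, hx, hx1⟩ := myex_neg (Ioo j j') v hv (by omega)
  rw [Finset.mem_Ioo] at hx
  exact ⟨x, hx.1, hx.2, hx1⟩

def emb4 (x0 x1 x2 x3 : Fin n) (h01 : x0 < x1) (h12 : x1 < x2) (h23 : x2 < x3) :
    Fin 4 ↪o Fin n :=
  OrderEmbedding.ofStrictMono ![x0, x1, x2, x3] (by
    have h02 := h01.trans h12
    have h13 := h12.trans h23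
    have h03 := h01.trans h13
    intro a b hab
    fin_cases a <;> fin_cases b <;>
      first
        | exact absurd hab (by decide)
        | simpa using h01
        | simpa using h12
        | simpa using h23
        | simpa using h02
        | simpa using h13
        | simpa using h03)

@[simp] lemma emb4_apply (x0 x1 x2 x3 : Fin n) (h01 : x0 < x1) (h12 : x1 < x2) (h23 : x2 < x3)
    (a : Fin 4) : emb4 x0 x1 x2 x3 h01 h12 h23 a = ![x0, x1, x2, x3] a := rfl

theorem statement12 {n : ℕ} (A : Matrix (Fin n) (Fin n) ℤ) (hA : IsASM A)
    (h2143 : ASMAvoids A p2143) (h3412 : ASMAvoids A p3412) :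
    ¬ ∃ (i : Fin n) (j1 j2 j3 j4 : Fin n), j1 < j2 ∧ j2 < j3 ∧ j3 < j4 ∧
      A i j1 = -1 ∧ A i j2 = -1 ∧ A i j3 = -1 ∧ A i j4 = -1 := by 
  rintro ⟨i, j1, j2, j3, j4, h12, h23, h34, e1, e2, e3, e4⟩
  obtain ⟨hent, hrow, hcol, hrps, hcps⟩ := hA
  -- facts about row i
  obtain ⟨⟨c0, hc0lt, hc0⟩, -⟩ := around (A i) (hent i) (hrps i) (hrow i) e1
  obtain ⟨c3, hc3l, hc3r, hc3⟩ := between_neg (A i) (hent i) (hrps i) h34 e3 e4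
  obtain ⟨-, ⟨c4, hc4lt, hc4⟩⟩ := around (A i) (hent i) (hrps i) (hrow i) e4
  -- facts about columns
  have colfact : ∀ j : Fin n, A i j = -1 →
      (∃ x, x < i ∧ A x j = 1) ∧ (∃ x, i < x ∧ A x j = 1) :=
    fun j hj => around (fun l => A l j) (fun l => hent l j) (hcps · j) (hcol j) hj
  obtain ⟨⟨a2, ha2lt, ha2⟩, -⟩ := colfact j2 e2
  obtain ⟨⟨a3, ha3lt, ha3⟩, ⟨b3, hb3lt, hb3⟩⟩ := colfact j3 e3
  obtain ⟨-, ⟨b1, hb1lt, hb1⟩⟩ := colfact j1 e1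
  obtain ⟨-, ⟨b4, hb4lt, hb4⟩⟩ := colfact j4 e4
  rcases lt_trichotomy a2 a3 with hcase | hcase | hcase
  · -- 3412 : rows a2 < a3 < i < b1, cols c0 < j1 < j2 < j3
    exact h3412 ⟨emb4 a2 a3 i b1 hcase ha3lt hb1lt,
      emb4 c0 j1 j2 j3 hc0lt h12 h23,
      by intro a; fin_cases a <;> simpa [p3412] using by assumption⟩
  · -- degenerate: a2 = a3 =: r has two 1s in row, get -1 between
    subst hcase
    obtain ⟨d, hdl, hdr, hd⟩ := between_one (A a2) (hent a2) (hrps a2) h23 ha2 (by rwa [])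
    obtain ⟨⟨e, helt, he⟩, -⟩ := around (fun l => A l d) (fun l => hent l d) (hcps · d)
      (hcol d) hd
    -- 2143 : rows e < a2 < i < b3, cols j2 < d < j3 < c3
    exact h2143 ⟨emb4 e a2 i b3 helt ha2lt hb3lt,
      emb4 j2 d j3 c3 hdl hdr hc3l,
      by intro a; fin_cases a <;> simpa [p2143] using by assumption⟩
  · -- 2143 : rows a3 < a2 < i < b4, cols j2 < j3 < j4 < c4
    exact h2143 ⟨emb4 a3 a2 i b4 hcase ha2lt hb4lt,
      emb4 j2 j3 j4 c4 h23 h34 hc4lt,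
      by intro a; fin_cases a <;> simpa [p2143] using by assumption⟩
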